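/- Let 0 ≤ μ < L < ∞, let I be a finite index set, and let (x_i, g_i, f_i) for i ∈ I be triples with x_i, g_i ∈ ℝ^d and f_i ∈ ℝ. Then the set {(x_i, g_i, f_i)}_{i∈I} is F_{μ,L}-interpolable if and only if the set {(x_i, g_i − μ x_i, f_i − (μ/2)‖x_i‖²)}_{i∈I} is F_{0,L−μ}-interpolable. -/

import Mathlib

open scoped RealInnerProductSpace

/-- `f : ℝ^d → ℝ` belongs to the class `F_{μ,L}` (for finite `L`): it is differentiable,
its gradient is `L`-Lipschitz, and `f - (μ/2)‖·‖²` is convex. -/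
def SmoothStronglyConvex {d : ℕ} (μ L : ℝ) (f : EuclideanSpace ℝ (Fin d) → ℝ) : Prop :=
  Differentiable ℝ f ∧
  (∀ x y, ‖gradient f x - gradient f y‖ ≤ L * ‖x - y‖) ∧
  ConvexOn ℝ Set.univ (fun x => f x - μ / 2 * ‖x‖ ^ 2)

/-- The set of triples `(x i, g i, f i)` is `F_{μ,L}`-interpolable. -/
def Interpolable {d : ℕ} {ι : Type*} (μ L : ℝ)
    (x g : ι → EuclideanSpace ℝ (Fin d)) (fv : ι → ℝ) : Prop :=
  ∃ f : EuclideanSpace ℝ (Fin d) → ℝ, SmoothStronglyConvex μ L f ∧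
    ∀ i, f (x i) = fv i ∧ gradient f (x i) = g i

/-!
Subtracting `μ/2 ‖·‖²` shifts the gradient by `μ • id`, which is exactly how the two data sets
correspond, and convexity of `f - μ/2 ‖·‖²` is part of the definition of `F_{μ,L}`. What remains
is the Lipschitz constant. Adding `μ/2 ‖·‖²` back costs at most `μ` by the triangle inequality.
Conversely, for `φ = f - μ/2 ‖·‖²` the `L`-Lipschitz gradient of `f` only yields the one-sided bound
`⟪∇φ a - ∇φ b, a - b⟫ ≤ (L - μ) ‖a - b‖²`; for a convex `φ` this gives the descent lemma, hence
cocoercivity `‖∇φ p - ∇φ q‖² ≤ (L - μ) ⟪∇φ p - ∇φ q, p - q⟫`, hence `(L - μ)`-Lipschitz gradients.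
-/

open Set AffineMap

section InnerProductSpace

variable {E : Type*} [NormedAddCommGroup E] [InnerProductSpace ℝ E]

lemma inner_sub_smul_le_of_norm_le {u v : E} {L μ : ℝ} (h : ‖u‖ ≤ L * ‖v‖) :
    ⟪u - μ • v, v⟫ ≤ (L - μ) * ‖v‖ ^ 2 := by
  have hCS : ⟪u, v⟫ ≤ ‖u‖ * ‖v‖ := real_inner_le_norm u v
  have hL : ‖u‖ * ‖v‖ ≤ L * ‖v‖ * ‖v‖ := mul_le_mul_of_nonneg_right h (norm_nonneg v)
  rw [inner_sub_left, real_inner_smul_left, real_inner_self_eq_norm_sq]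
  linarith

lemma norm_le_mul_norm_of_sq_norm_le_mul_inner {u v : E} {K : ℝ} (hK : 0 ≤ K)
    (h : ‖u‖ ^ 2 ≤ K * ⟪u, v⟫) : ‖u‖ ≤ K * ‖v‖ := by
  rcases (norm_nonneg u).eq_or_lt with hu | hu
  · rw [← hu]
    positivity
  refine le_of_mul_le_mul_left ?_ hu
  calc ‖u‖ * ‖u‖ = ‖u‖ ^ 2 := (sq _).symm
    _ ≤ K * ⟪u, v⟫ := h
    _ ≤ K * (‖u‖ * ‖v‖) := mul_le_mul_of_nonneg_left (real_inner_le_norm u v) hK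
    _ = ‖u‖ * (K * ‖v‖) := by ring

variable [CompleteSpace E]

section Gradient

variable {f g : E → ℝ} {f' g' x : E}

lemma HasGradientAt.add (hf : HasGradientAt f f' x) (hg : HasGradientAt g g' x) :
    HasGradientAt (fun y => f y + g y) (f' + g') x := by
  rw [hasGradientAt_iff_hasFDerivAt, map_add]
  exact (hasGradientAt_iff_hasFDerivAt.1 hf).add (hasGradientAt_iff_hasFDerivAt.1 hg)

lemma HasGradientAt.sub (hf : HasGradientAt f f' x) (hg : HasGradientAt g g' x) :
    HasGradientAt (fun y => f y - g y) (f' - g') x := by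
  rw [hasGradientAt_iff_hasFDerivAt, map_sub]
  exact (hasGradientAt_iff_hasFDerivAt.1 hf).sub (hasGradientAt_iff_hasFDerivAt.1 hg)

lemma hasGradientAt_half_mul_norm_sq (c : ℝ) (x : E) :
    HasGradientAt (fun y : E => c / 2 * ‖y‖ ^ 2) (c • x) x := by
  rw [hasGradientAt_iff_hasFDerivAt]
  refine ((hasStrictFDerivAt_norm_sq x).hasFDerivAt.const_mul (c / 2)).congr_fderiv ?_
  ext v
  simp [InnerProductSpace.toDual_apply_apply]
  ring

lemma gradient_add_half_mul_norm_sq (hf : DifferentiableAt ℝ f x) (c : ℝ) :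
    gradient (fun y => f y + c / 2 * ‖y‖ ^ 2) x = gradient f x + c • x :=
  (hf.hasGradientAt.add (hasGradientAt_half_mul_norm_sq c x)).gradient

lemma gradient_sub_half_mul_norm_sq (hf : DifferentiableAt ℝ f x) (c : ℝ) :
    gradient (fun y => f y - c / 2 * ‖y‖ ^ 2) x = gradient f x - c • x :=
  (hf.hasGradientAt.sub (hasGradientAt_half_mul_norm_sq c x)).gradient

lemma hasDerivAt_comp_lineMap {y : E} {t : ℝ} (hf : DifferentiableAt ℝ f (lineMap x y t)) :
    HasDerivAt (fun s => f (lineMap x y s)) ⟪gradient f (lineMap x y t), y - x⟫ t :=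
  (hasGradientAt_iff_hasFDerivAt.1 hf.hasGradientAt).comp_hasDerivAt t hasDerivAt_lineMap

end Gradient

section Convexity

variable {φ : E → ℝ} {K : ℝ}

lemma ConvexOn.add_inner_gradient_le (hc : ConvexOn ℝ univ φ) {x : E}
    (hd : DifferentiableAt ℝ φ x) (y : E) : φ x + ⟪gradient φ x, y - x⟫ ≤ φ y := by
  have hline : ConvexOn ℝ univ (fun t : ℝ => φ (lineMap x y t)) :=
    hc.comp_affineMap (lineMap x y)
  have hder := hasDerivAt_comp_lineMap (x := x) (y := y) (t := (0 : ℝ)) (by simpa using hd)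
  have := hline.le_slope_of_hasDerivAt (mem_univ 0) (mem_univ 1) one_pos hder
  simp only [slope_def_field, lineMap_apply_zero, lineMap_apply_one, sub_zero, div_one] at this
  linarith

lemma convexOn_univ_of_inner_gradient_sub_nonneg (hd : Differentiable ℝ φ)
    (hmono : ∀ a b, 0 ≤ ⟪gradient φ a - gradient φ b, a - b⟫) : ConvexOn ℝ univ φ := by
  refine ⟨convex_univ, fun p _ q _ a b ha hb hab => ?_⟩
  set g : ℝ → ℝ := fun t => φ (lineMap p q t)
  have hg (t : ℝ) : HasDerivAt g ⟪gradient φ (lineMap p q t), q - p⟫ t :=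
    hasDerivAt_comp_lineMap (hd _)
  have hg_mono : Monotone (deriv g) := by
    intro s t hst
    rw [(hg s).deriv, (hg t).deriv, ← sub_nonneg, ← inner_sub_left]
    rcases hst.eq_or_lt with rfl | hlt
    · simp
    have hdiff : lineMap p q t - lineMap p q s = (t - s) • (q - p) := by
      simp only [lineMap_apply_module']
      module
    have := hmono (lineMap p q t) (lineMap p q s)
    rw [hdiff, real_inner_smul_right] at this
    exact (mul_nonneg_iff_of_pos_left (sub_pos.2 hlt)).1 this
  have := (hg_mono.convexOn_univ_of_deriv fun t => (hg t).differentiableAt).2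
    (mem_univ 0) (mem_univ 1) ha hb hab
  obtain rfl : a = 1 - b := by linarith
  simpa [g, lineMap_apply_module] using this

lemma convexOn_half_mul_norm_sq_sub (hd : Differentiable ℝ φ)
    (hupper : ∀ a b, ⟪gradient φ a - gradient φ b, a - b⟫ ≤ K * ‖a - b‖ ^ 2) :
    ConvexOn ℝ univ (fun y => K / 2 * ‖y‖ ^ 2 - φ y) := by
  have hgrad (y : E) :
      HasGradientAt (fun y => K / 2 * ‖y‖ ^ 2 - φ y) (K • y - gradient φ y) y :=
    (hasGradientAt_half_mul_norm_sq K y).sub (hd y).hasGradientAt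
  refine convexOn_univ_of_inner_gradient_sub_nonneg (fun y => (hgrad y).differentiableAt)
    fun a b => ?_
  have hsplit : K • a - gradient φ a - (K • b - gradient φ b)
      = K • (a - b) - (gradient φ a - gradient φ b) := by module
  rw [(hgrad a).gradient, (hgrad b).gradient, hsplit, inner_sub_left, real_inner_smul_left,
    real_inner_self_eq_norm_sq]
  linarith [hupper a b]

lemma le_add_inner_gradient_add_half_mul_norm_sq (hd : Differentiable ℝ φ)
    (hupper : ∀ a b, ⟪gradient φ a - gradient φ b, a - b⟫ ≤ K * ‖a - b‖ ^ 2) (u w : E) :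
    φ w ≤ φ u + ⟪gradient φ u, w - u⟫ + K / 2 * ‖w - u‖ ^ 2 := by
  have hgrad := (hasGradientAt_half_mul_norm_sq K u).sub (hd u).hasGradientAt
  have := (convexOn_half_mul_norm_sq_sub hd hupper).add_inner_gradient_le hgrad.differentiableAt w
  rw [hgrad.gradient, inner_sub_left, real_inner_smul_left, inner_sub_right,
    real_inner_self_eq_norm_sq] at this
  rw [norm_sub_sq_real, real_inner_comm u w]
  linarith

lemma ConvexOn.add_inner_gradient_add_inv_mul_sq_norm_le (hc : ConvexOn ℝ univ φ)
    (hd : Differentiable ℝ φ) (hK : 0 < K)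
    (hupper : ∀ a b, ⟪gradient φ a - gradient φ b, a - b⟫ ≤ K * ‖a - b‖ ^ 2) (p q : E) :
    φ p + ⟪gradient φ p, q - p⟫ + (2 * K)⁻¹ * ‖gradient φ q - gradient φ p‖ ^ 2 ≤ φ q := by
  set D := gradient φ q - gradient φ p
  -- descent lemma at `q` and tangent plane at `p`, both evaluated at the gradient step from `q`
  set z := q - K⁻¹ • D
  have hdesc := le_add_inner_gradient_add_half_mul_norm_sq hd hupper q z
  have hsub := hc.add_inner_gradient_le (hd p) z
  have hzq : z - q = -(K⁻¹ • D) := by simp [z]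
  have hzp : z - p = (q - p) - K⁻¹ • D := by simp [z]; abel
  rw [hzq, inner_neg_right, real_inner_smul_right, norm_neg, norm_smul, mul_pow,
    Real.norm_of_nonneg (inv_nonneg.2 hK.le)] at hdesc
  rw [hzp, inner_sub_right, real_inner_smul_right] at hsub
  have hD : ⟪gradient φ q, D⟫ - ⟪gradient φ p, D⟫ = ‖D‖ ^ 2 := by
    rw [← inner_sub_left, real_inner_self_eq_norm_sq]
  have hKinv : K * K⁻¹ = 1 := mul_inv_cancel₀ hK.ne'
  linear_combination hdesc + hsub - K⁻¹ * hD + K⁻¹ * ‖D‖ ^ 2 / 2 * hKinv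

lemma ConvexOn.sq_norm_gradient_sub_le_mul_inner (hc : ConvexOn ℝ univ φ)
    (hd : Differentiable ℝ φ) (hK : 0 < K)
    (hupper : ∀ a b, ⟪gradient φ a - gradient φ b, a - b⟫ ≤ K * ‖a - b‖ ^ 2) (p q : E) :
    ‖gradient φ p - gradient φ q‖ ^ 2 ≤ K * ⟪gradient φ p - gradient φ q, p - q⟫ := by
  have hpq := hc.add_inner_gradient_add_inv_mul_sq_norm_le hd hK hupper p q
  have hqp := hc.add_inner_gradient_add_inv_mul_sq_norm_le hd hK hupper q p
  rw [norm_sub_rev] at hpq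
  have hI : ⟪gradient φ p, q - p⟫ + ⟪gradient φ q, p - q⟫
      = -⟪gradient φ p - gradient φ q, p - q⟫ := by
    simp only [inner_sub_left, inner_sub_right]
    ring
  have hKinv : K * K⁻¹ = 1 := mul_inv_cancel₀ hK.ne'
  linear_combination K * (hpq + hqp) - K * hI - ‖gradient φ p - gradient φ q‖ ^ 2 * hKinv

lemma ConvexOn.norm_gradient_sub_le (hc : ConvexOn ℝ univ φ) (hd : Differentiable ℝ φ)
    (hK : 0 < K) (hupper : ∀ a b, ⟪gradient φ a - gradient φ b, a - b⟫ ≤ K * ‖a - b‖ ^ 2)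
    (p q : E) : ‖gradient φ p - gradient φ q‖ ≤ K * ‖p - q‖ :=
  norm_le_mul_norm_of_sq_norm_le_mul_inner hK.le
    (hc.sq_norm_gradient_sub_le_mul_inner hd hK hupper p q)

end Convexity

end InnerProductSpace

namespace SmoothStronglyConvex

variable {d : ℕ} {μ L : ℝ} {f : EuclideanSpace ℝ (Fin d) → ℝ}

lemma sub_half_mul_norm_sq (hf : SmoothStronglyConvex μ L f) (hμL : μ < L) :
    SmoothStronglyConvex 0 (L - μ) (fun y => f y - μ / 2 * ‖y‖ ^ 2) := by
  obtain ⟨hd, hlip, hconv⟩ := hf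
  have hgrad (y : EuclideanSpace ℝ (Fin d)) :
      HasGradientAt (fun y => f y - μ / 2 * ‖y‖ ^ 2) (gradient f y - μ • y) y :=
    (hd y).hasGradientAt.sub (hasGradientAt_half_mul_norm_sq μ y)
  have hd' : Differentiable ℝ (fun y => f y - μ / 2 * ‖y‖ ^ 2) :=
    fun y => (hgrad y).differentiableAt
  have hupper (a b : EuclideanSpace ℝ (Fin d)) :
      ⟪gradient (fun y => f y - μ / 2 * ‖y‖ ^ 2) a -
        gradient (fun y => f y - μ / 2 * ‖y‖ ^ 2) b, a - b⟫ ≤ (L - μ) * ‖a - b‖ ^ 2 := by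
    have hsplit : gradient f a - μ • a - (gradient f b - μ • b)
        = (gradient f a - gradient f b) - μ • (a - b) := by module
    rw [(hgrad a).gradient, (hgrad b).gradient, hsplit]
    exact inner_sub_smul_le_of_norm_le (hlip a b)
  exact ⟨hd', hconv.norm_gradient_sub_le hd' (sub_pos.2 hμL) hupper, by simpa using hconv⟩

lemma add_half_mul_norm_sq (hf : SmoothStronglyConvex 0 (L - μ) f) (hμ : 0 ≤ μ) :
    SmoothStronglyConvex μ L (fun y => f y + μ / 2 * ‖y‖ ^ 2) := by
  obtain ⟨hd, hlip, hconv⟩ := hf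
  have hgrad (y : EuclideanSpace ℝ (Fin d)) :
      HasGradientAt (fun y => f y + μ / 2 * ‖y‖ ^ 2) (gradient f y + μ • y) y :=
    (hd y).hasGradientAt.add (hasGradientAt_half_mul_norm_sq μ y)
  refine ⟨fun y => (hgrad y).differentiableAt, fun a b => ?_, by simpa using hconv⟩
  have hsplit : gradient f a + μ • a - (gradient f b + μ • b)
      = (gradient f a - gradient f b) + μ • (a - b) := by module
  rw [(hgrad a).gradient, (hgrad b).gradient, hsplit]
  calc ‖(gradient f a - gradient f b) + μ • (a - b)‖
      ≤ ‖gradient f a - gradient f b‖ + ‖μ • (a - b)‖ := norm_add_le _ _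
    _ ≤ (L - μ) * ‖a - b‖ + μ * ‖a - b‖ := by
      rw [norm_smul, Real.norm_of_nonneg hμ]
      linarith [hlip a b]
    _ = L * ‖a - b‖ := by ring

end SmoothStronglyConvex

theorem interpolable_iff_curvature_subtraction_general {d : ℕ} {ι : Type*}
    (μ L : ℝ) (hμ : 0 ≤ μ) (hμL : μ < L)
    (x g : ι → EuclideanSpace ℝ (Fin d)) (fv : ι → ℝ) :
    Interpolable μ L x g fv ↔
      Interpolable 0 (L - μ) x (fun i => g i - μ • x i)
        (fun i => fv i - μ / 2 * ‖x i‖ ^ 2) := by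
  constructor
  · rintro ⟨f, hf, hfx⟩
    refine ⟨_, hf.sub_half_mul_norm_sq hμL, fun i => ⟨by rw [(hfx i).1], ?_⟩⟩
    rw [gradient_sub_half_mul_norm_sq (hf.1 _), (hfx i).2]
  · rintro ⟨φ, hφ, hφx⟩
    refine ⟨_, hφ.add_half_mul_norm_sq hμ, fun i => ⟨by rw [(hφx i).1]; ring, ?_⟩⟩
    rw [gradient_add_half_mul_norm_sq (hφ.1 _), (hφx i).2, sub_add_cancel]

/-- Lemma 1 of the paper (minimal curvature subtraction, finite `L`):
`{(x_i, g_i, f_i)}` is `F_{μ,L}`-interpolable iff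
`{(x_i, g_i - μ x_i, f_i - (μ/2)‖x_i‖²)}` is `F_{0,L-μ}`-interpolable. -/
theorem interpolable_iff_curvature_subtraction {d : ℕ} {ι : Type*} [Fintype ι]
    (μ L : ℝ) (hμ : 0 ≤ μ) (hμL : μ < L)
    (x g : ι → EuclideanSpace ℝ (Fin d)) (fv : ι → ℝ) :
    Interpolable μ L x g fv ↔
      Interpolable 0 (L - μ) x (fun i => g i - μ • x i)
        (fun i => fv i - μ / 2 * ‖x i‖ ^ 2) :=
  interpolable_iff_curvature_subtraction_general μ L hμ hμL x g fv
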